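/- arXiv:1103.2816 — 2 statements merged into one kernel-verified Lean document; each statement's English description precedes it below -/
import Mathlib

section
/- Let r ≥ 2 and define U₂ = {X ∈ ℂ^{d×d} : ‖X‖_F ≤ 1, ‖X‖_* ≤ √r ‖X‖_F}. For any self-adjoint linear operator M on ℂ^{d×d} (with Hilbert–Schmidt inner product), define ‖M‖_(r) = sup_{X∈U₂} |(X, M X)|. Then ‖M‖_(r) ≥ (1/(3√2 d²)) ‖M‖_F, where ‖M‖_F is the Frobenius norm of M viewed as a matrix acting on the d²-dimensional space ℂ^{d×d}. -/
open Matrix BigOperators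

/-- Singular values of a d×d complex matrix. -/
noncomputable def singVals {d : ℕ} (M : Matrix (Fin d) (Fin d) ℂ) : Fin d → ℝ :=
  fun i => Real.sqrt ((Matrix.isHermitian_conjTranspose_mul_self M).eigenvalues i)

/-- Nuclear (trace) norm: sum of singular values. -/
noncomputable def nucNorm {d : ℕ} (M : Matrix (Fin d) (Fin d) ℂ) : ℝ :=
  ∑ i, singVals M i

/-- Frobenius norm: ℓ₂ norm of singular values. -/
noncomputable def frobNorm {d : ℕ} (M : Matrix (Fin d) (Fin d) ℂ) : ℝ :=
  Real.sqrt (∑ i, (singVals M i) ^ 2)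

/-- Operator norm: largest singular value. -/
noncomputable def opNorm {d : ℕ} (M : Matrix (Fin d) (Fin d) ℂ) : ℝ :=
  ⨆ i, singVals M i


/-- The set U₂ = {X : ‖X‖_F ≤ 1, ‖X‖_* ≤ √r ‖X‖_F}. -/
def U2 (d r : ℕ) : Set (Matrix (Fin d) (Fin d) ℂ) :=
  {X | frobNorm X ≤ 1 ∧ nucNorm X ≤ Real.sqrt r * frobNorm X}

/-- The (r)-norm ‖M‖_(r) = sup_{X ∈ U₂} |(X, M X)|. -/
noncomputable def rNorm {d : ℕ} (r : ℕ)
    (M : Matrix (Fin d) (Fin d) ℂ →ₗ[ℂ] Matrix (Fin d) (Fin d) ℂ) : ℝ :=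
  sSup ((fun X => ‖Matrix.trace (Xᴴ * M X)‖) '' U2 d r)

/-- Frobenius norm of a superoperator on ℂ^{d×d}, via matrix units. -/
noncomputable def superFrobNorm {d : ℕ}
    (M : Matrix (Fin d) (Fin d) ℂ →ₗ[ℂ] Matrix (Fin d) (Fin d) ℂ) : ℝ :=
  Real.sqrt (∑ a : Fin d, ∑ b : Fin d, ∑ c : Fin d, ∑ e : Fin d,
    ‖Matrix.trace ((Matrix.single c e (1 : ℂ))ᴴ *
      M (Matrix.single a b (1 : ℂ)))‖ ^ 2)

namespace RNormAux
open scoped ComplexOrder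

variable {d : ℕ}

lemma trace_eq_sum_eigen {n : Type*} [Fintype n] [DecidableEq n] {A : Matrix n n ℂ}
    (hA : A.IsHermitian) : A.trace = ∑ i, (hA.eigenvalues i : ℂ) := by
  exact hA.trace_eq_sum_eigenvalues

lemma sum_singVals_sq (X : Matrix (Fin d) (Fin d) ℂ) :
    ∑ i, singVals X i ^ 2 = (Matrix.trace (Xᴴ * X)).re := by
  have h : ∀ i, singVals X i ^ 2 = (Matrix.isHermitian_conjTranspose_mul_self X).eigenvalues i :=
    fun i => Real.sq_sqrt (Matrix.eigenvalues_conjTranspose_mul_self_nonneg X i)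
  rw [Finset.sum_congr rfl fun i _ => h i,
    trace_eq_sum_eigen (Matrix.isHermitian_conjTranspose_mul_self X)]
  rw [Complex.re_sum]
  simp

lemma re_trace_conjTranspose_mul_self (X : Matrix (Fin d) (Fin d) ℂ) :
    (Matrix.trace (Xᴴ * X)).re = ∑ i, ∑ j, ‖(X i j)‖ ^ 2 := by
  rw [Matrix.trace]
  simp only [Matrix.diag, Matrix.mul_apply, Matrix.conjTranspose_apply]
  rw [Complex.re_sum]
  rw [Finset.sum_comm]
  refine Finset.sum_congr rfl fun i _ => ?_
  rw [Complex.re_sum]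
  refine Finset.sum_congr rfl fun j _ => ?_
  rw [← Complex.normSq_eq_norm_sq]
  simp [Complex.normSq_apply, Complex.mul_re]

lemma sum_singVals_sq' (X : Matrix (Fin d) (Fin d) ℂ) :
    ∑ i, singVals X i ^ 2 = ∑ i, ∑ j, ‖(X i j)‖ ^ 2 := by
  rw [sum_singVals_sq, re_trace_conjTranspose_mul_self]

lemma singVals_nonneg (X : Matrix (Fin d) (Fin d) ℂ) (i : Fin d) : 0 ≤ singVals X i :=
  Real.sqrt_nonneg _

lemma frobNorm_nonneg (X : Matrix (Fin d) (Fin d) ℂ) : 0 ≤ frobNorm X := Real.sqrt_nonneg _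

lemma nucNorm_le_sqrt_rank_mul_frobNorm (X : Matrix (Fin d) (Fin d) ℂ) :
    nucNorm X ≤ Real.sqrt X.rank * frobNorm X := by
  classical
  set h := Matrix.isHermitian_conjTranspose_mul_self X
  set T : Finset (Fin d) := Finset.univ.filter fun i => h.eigenvalues i ≠ 0 with hT
  have hzero : ∀ i ∈ Finset.univ \ T, singVals X i = 0 := by
    intro i hi
    simp only [hT, Finset.mem_sdiff, Finset.mem_filter, Finset.mem_univ, true_and,
      not_not] at hi
    simp [singVals, hi]
  have hsum : nucNorm X = ∑ i ∈ T, singVals X i := by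
    rw [nucNorm, ← Finset.sum_subset (Finset.subset_univ T)]
    intro i hi hni
    exact hzero i (Finset.mem_sdiff.2 ⟨hi, hni⟩)
  have hCS : (∑ i ∈ T, singVals X i) ^ 2 ≤ T.card * ∑ i ∈ T, singVals X i ^ 2 :=
    sq_sum_le_card_mul_sum_sq
  have hle : (∑ i ∈ T, singVals X i ^ 2) ≤ ∑ i, singVals X i ^ 2 :=
    Finset.sum_le_sum_of_subset_of_nonneg (Finset.subset_univ T)
      (fun i _ _ => sq_nonneg _)
  have hcard : (T.card : ℝ) = X.rank := by
    have := h.rank_eq_card_non_zero_eigs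
    rw [Matrix.rank_conjTranspose_mul_self] at this
    rw [this, Fintype.card_subtype]
  have h1 : nucNorm X ^ 2 ≤ (X.rank : ℝ) * ∑ i, singVals X i ^ 2 := by
    rw [hsum, ← hcard]
    exact hCS.trans (by
      have : (0:ℝ) ≤ (T.card : ℝ) := Nat.cast_nonneg _
      nlinarith [hle])
  have hnn : 0 ≤ nucNorm X := Finset.sum_nonneg fun i _ => singVals_nonneg X i
  have h2 := Real.sqrt_le_sqrt h1
  rw [Real.sqrt_sq hnn, Real.sqrt_mul (Nat.cast_nonneg _)] at h2
  exact h2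

lemma rank_add_le (A B : Matrix (Fin d) (Fin d) ℂ) : (A + B).rank ≤ A.rank + B.rank := by
  rw [Matrix.rank, Matrix.rank, Matrix.rank]
  have hrange : LinearMap.range (A + B).mulVecLin ≤
      LinearMap.range A.mulVecLin ⊔ LinearMap.range B.mulVecLin := by
    rintro x ⟨v, rfl⟩
    rw [Matrix.mulVecLin_add]
    exact Submodule.add_mem_sup ⟨v, rfl⟩ ⟨v, rfl⟩
  exact (Submodule.finrank_mono hrange).trans
    (Submodule.finrank_add_le_finrank_add_finrank _ _)

lemma rank_smul_le (c : ℂ) (A : Matrix (Fin d) (Fin d) ℂ) : (c • A).rank ≤ A.rank := by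
  have : c • A = (c • (1 : Matrix (Fin d) (Fin d) ℂ)) * A := by
    rw [Matrix.smul_mul, Matrix.one_mul]
  rw [this]
  exact Matrix.rank_mul_le_right _ _

lemma rank_stdBasisMatrix_le (a b : Fin d) :
    (Matrix.single a b (1 : ℂ)).rank ≤ 1 := by
  rw [Matrix.rank]
  have hrange : LinearMap.range (Matrix.single a b (1 : ℂ)).mulVecLin ≤
      Submodule.span ℂ {(Pi.single a 1 : Fin d → ℂ)} := by
    rintro x ⟨v, rfl⟩
    rw [Matrix.mulVecLin_apply, Matrix.single_mulVec]
    have : Function.update (0 : Fin d → ℂ) a (1 * v b)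
        = (v b) • (Pi.single a 1 : Fin d → ℂ) := by
      ext i
      rcases eq_or_ne i a with rfl | h
      · simp
      · simp [Function.update_of_ne h, Pi.single_eq_of_ne h]
    rw [this]
    exact Submodule.smul_mem _ _ (Submodule.mem_span_singleton_self _)
  refine (Submodule.finrank_mono hrange).trans ?_
  have := finrank_span_le_card (R := ℂ) ({(Pi.single a 1 : Fin d → ℂ)} : Set (Fin d → ℂ))
  simpa using this

lemma sumsq_std (a b : Fin d) :
    ∑ i, ∑ j, ‖(Matrix.single a b (1:ℂ) i j)‖ ^ 2 = 1 := by
  have : ∀ i j, ‖(Matrix.single a b (1:ℂ) i j)‖ ^ 2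
      = if a = i ∧ b = j then (1:ℝ) else 0 := by
    intro i j
    rw [Matrix.single]
    by_cases h : a = i ∧ b = j <;> simp [h]
  simp only [this, ite_and]
  simp [Finset.sum_ite_eq]

lemma mem_U2 {r : ℕ} (hr : 2 ≤ r) (X : Matrix (Fin d) (Fin d) ℂ)
    (h1 : ∑ i, ∑ j, ‖(X i j)‖ ^ 2 ≤ 1) (h2 : X.rank ≤ 2) : X ∈ U2 d r := by
  have hfrob : frobNorm X ≤ 1 := by
    rw [frobNorm, sum_singVals_sq']
    exact Real.sqrt_le_one.2 h1
  refine ⟨hfrob, ?_⟩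
  refine (nucNorm_le_sqrt_rank_mul_frobNorm X).trans ?_
  apply mul_le_mul_of_nonneg_right _ (frobNorm_nonneg X)
  apply Real.sqrt_le_sqrt
  exact_mod_cast h2.trans hr

lemma frobNorm_le_one_entry {X : Matrix (Fin d) (Fin d) ℂ} (h : frobNorm X ≤ 1)
    (i j : Fin d) : ‖(X i j)‖ ≤ 1 := by
  have hs : ∑ i, ∑ j, ‖(X i j)‖ ^ 2 ≤ 1 := by
    have h0 : 0 ≤ ∑ i, ∑ j, ‖(X i j)‖ ^ 2 :=
      Finset.sum_nonneg fun _ _ => Finset.sum_nonneg fun _ _ => sq_nonneg _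
    have := Real.sqrt_le_sqrt (le_of_eq (sum_singVals_sq' X).symm)
    calc ∑ i, ∑ j, ‖(X i j)‖ ^ 2
        = Real.sqrt (∑ i, ∑ j, ‖(X i j)‖ ^ 2) ^ 2 := (Real.sq_sqrt h0).symm
      _ ≤ 1 := by
          have : Real.sqrt (∑ i, ∑ j, ‖(X i j)‖ ^ 2) ≤ 1 := by
            rw [← sum_singVals_sq']; exact h
          nlinarith [Real.sqrt_nonneg (∑ i, ∑ j, ‖(X i j)‖ ^ 2)]
  have hterm : ‖(X i j)‖ ^ 2 ≤ 1 := by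
    calc ‖(X i j)‖ ^ 2
        ≤ ∑ j', ‖(X i j')‖ ^ 2 :=
          Finset.single_le_sum (f := fun j' => ‖(X i j')‖ ^ 2)
            (fun _ _ => sq_nonneg _) (Finset.mem_univ j)
      _ ≤ ∑ i', ∑ j', ‖(X i' j')‖ ^ 2 :=
          Finset.single_le_sum (f := fun i' => ∑ j', ‖(X i' j')‖ ^ 2)
            (fun i' _ => Finset.sum_nonneg fun _ _ => sq_nonneg _) (Finset.mem_univ i)
      _ ≤ 1 := hs
  nlinarith [norm_nonneg (X i j)]

lemma Q_expand (M : Matrix (Fin d) (Fin d) ℂ →ₗ[ℂ] Matrix (Fin d) (Fin d) ℂ)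
    (c : ℂ) (X Y : Matrix (Fin d) (Fin d) ℂ) :
    Matrix.trace ((Y + c • X)ᴴ * M (Y + c • X)) =
      Matrix.trace (Yᴴ * M Y) + c * Matrix.trace (Yᴴ * M X)
        + (starRingEnd ℂ) c * Matrix.trace (Xᴴ * M Y)
        + (starRingEnd ℂ) c * c * Matrix.trace (Xᴴ * M X) := by
  simp only [Matrix.conjTranspose_add, Matrix.conjTranspose_smul, map_add, _root_.map_smul,
    Matrix.add_mul, Matrix.mul_add, Matrix.smul_mul, Matrix.mul_smul, Matrix.trace_add,
    Matrix.trace_smul, smul_smul, smul_eq_mul, RCLike.star_def]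
  ring

lemma trace_expand (M : Matrix (Fin d) (Fin d) ℂ →ₗ[ℂ] Matrix (Fin d) (Fin d) ℂ)
    (X : Matrix (Fin d) (Fin d) ℂ) :
    Matrix.trace (Xᴴ * M X) = ∑ a : Fin d, ∑ b : Fin d, ∑ c : Fin d, ∑ e : Fin d,
      X a b * ((starRingEnd ℂ) (X c e) *
        Matrix.trace ((Matrix.single c e (1:ℂ))ᴴ *
          M (Matrix.single a b (1:ℂ)))) := by
  have hX : X = ∑ i : Fin d, ∑ j : Fin d, (X i j) • Matrix.single i j (1:ℂ) := by
    conv_lhs => rw [Matrix.matrix_eq_sum_single X]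
    refine Finset.sum_congr rfl fun i _ => Finset.sum_congr rfl fun j _ => ?_
    rw [Matrix.smul_single, smul_eq_mul, mul_one]
  have hMX : M X = ∑ i : Fin d, ∑ j : Fin d,
      (X i j) • M (Matrix.single i j (1:ℂ)) := by
    conv_lhs => rw [hX]
    rw [_root_.map_sum M (fun i => ∑ j : Fin d, X i j • Matrix.single i j (1:ℂ))
      Finset.univ]
    refine Finset.sum_congr rfl fun i _ => ?_
    rw [_root_.map_sum M (fun j => X i j • Matrix.single i j (1:ℂ)) Finset.univ]
    exact Finset.sum_congr rfl fun j _ => map_smul M _ _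
  have hXH : Xᴴ = ∑ i : Fin d, ∑ j : Fin d,
      (starRingEnd ℂ) (X i j) • (Matrix.single i j (1:ℂ))ᴴ := by
    conv_lhs => rw [hX]
    simp only [Matrix.conjTranspose_sum, Matrix.conjTranspose_smul, RCLike.star_def]
  rw [hXH, hMX]
  simp only [Matrix.sum_mul, Matrix.mul_sum, Matrix.smul_mul, Matrix.mul_smul,
    Matrix.trace_sum, Matrix.trace_smul, smul_smul, smul_eq_mul]
  refine Finset.sum_congr rfl fun a _ => Finset.sum_congr rfl fun b _ => ?_
  rw [Finset.mul_sum]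
  refine Finset.sum_congr rfl fun c _ => ?_
  rw [Finset.mul_sum]

lemma abs_sum4 (f : Fin d → Fin d → Fin d → Fin d → ℂ) :
    ‖(∑ c : Fin d, ∑ e : Fin d, ∑ a : Fin d, ∑ b : Fin d, f c e a b)‖
      ≤ ∑ c : Fin d, ∑ e : Fin d, ∑ a : Fin d, ∑ b : Fin d, ‖(f c e a b)‖ := by
  refine (norm_sum_le _ _).trans (Finset.sum_le_sum fun c _ => ?_)
  refine (norm_sum_le _ _).trans (Finset.sum_le_sum fun e _ => ?_)
  refine (norm_sum_le _ _).trans (Finset.sum_le_sum fun a _ => ?_)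
  exact norm_sum_le _ _


lemma stdBasisMatrix_mem_U2 {r : ℕ} (hr : 2 ≤ r) (a b : Fin d) :
    Matrix.single a b (1:ℂ) ∈ U2 d r :=
  mem_U2 hr _ (le_of_eq (sumsq_std a b)) ((rank_stdBasisMatrix_le a b).trans one_le_two)

lemma combo_mem_U2 {r : ℕ} (hr : 2 ≤ r) (a b c e : Fin d) (α : ℂ)
    (hα : ‖α‖ = 1) (hne : ¬(a = c ∧ b = e)) :
    ((Real.sqrt 2 : ℂ))⁻¹ • (Matrix.single a b (1:ℂ)
      + α • Matrix.single c e (1:ℂ)) ∈ U2 d r := by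
  apply mem_U2 hr
  · have hent : ∀ i j, ‖((((Real.sqrt 2 : ℂ))⁻¹ • (Matrix.single a b (1:ℂ)
        + α • Matrix.single c e (1:ℂ))) i j)‖ ^ 2
        = (1/2) * (‖(Matrix.single a b (1:ℂ) i j)‖ ^ 2
          + ‖(Matrix.single c e (1:ℂ) i j)‖ ^ 2) := by
      intro i j
      have habs : ‖((Real.sqrt 2 : ℂ))⁻¹‖ = (Real.sqrt 2)⁻¹ := by
        rw [norm_inv, Complex.norm_real, Real.norm_of_nonneg (Real.sqrt_nonneg 2)]
      have hsq : ((Real.sqrt 2)⁻¹) ^ 2 = 1/2 := by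
        rw [inv_pow, Real.sq_sqrt (by norm_num : (0:ℝ) ≤ 2)]
        norm_num
      simp only [Matrix.smul_apply, Matrix.add_apply, smul_eq_mul, norm_mul, mul_pow,
        habs, hsq]
      by_cases h1 : a = i ∧ b = j
      · obtain ⟨rfl, rfl⟩ := h1
        have h2 : ¬(c = a ∧ e = b) := fun hh => hne ⟨hh.1.symm, hh.2.symm⟩
        rw [Matrix.single_apply_same, Matrix.single_apply_of_ne _ _ _ _ _ h2]
        simp
      · rw [Matrix.single_apply_of_ne _ _ _ _ _ h1]
        by_cases h2 : c = i ∧ e = j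
        · obtain ⟨rfl, rfl⟩ := h2
          rw [Matrix.single_apply_same]
          simp [hα]
        · rw [Matrix.single_apply_of_ne _ _ _ _ _ h2]
          simp
    simp only [hent]
    simp only [← Finset.mul_sum, Finset.sum_add_distrib]
    rw [sumsq_std, sumsq_std]
    norm_num
  · refine (rank_smul_le _ _).trans ((rank_add_le _ _).trans ?_)
    have h1 := rank_stdBasisMatrix_le a b
    have h2 := (rank_smul_le α (Matrix.single c e (1:ℂ))).trans
      (rank_stdBasisMatrix_le c e)
    omega

end RNormAux

open RNormAux in
theorem rNorm_ge_superFrobNorm {d r : ℕ} (hr : 2 ≤ r)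
    (M : Matrix (Fin d) (Fin d) ℂ →ₗ[ℂ] Matrix (Fin d) (Fin d) ℂ)
    (hsa : ∀ X Y : Matrix (Fin d) (Fin d) ℂ,
      Matrix.trace (Xᴴ * M Y) = Matrix.trace ((M X)ᴴ * Y)) :
    rNorm r M ≥ (1 / (3 * Real.sqrt 2 * (d : ℝ) ^ 2)) * superFrobNorm M := by
  classical
  set S : Set ℝ := (fun X => ‖(Matrix.trace (Xᴴ * M X))‖) '' U2 d r with hS
  set C : ℝ := ∑ a : Fin d, ∑ b : Fin d, ∑ c : Fin d, ∑ e : Fin d,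
    ‖(Matrix.trace ((Matrix.single c e (1:ℂ))ᴴ *
      M (Matrix.single a b (1:ℂ))))‖ with hC
  have hbdd : BddAbove S := by
    refine ⟨C, ?_⟩
    rintro y ⟨X, hX, rfl⟩
    simp only []
    rw [trace_expand M X, hC]
    refine (abs_sum4 _).trans ?_
    refine Finset.sum_le_sum fun a _ => Finset.sum_le_sum fun b _ => ?_
    refine Finset.sum_le_sum fun c _ => Finset.sum_le_sum fun e _ => ?_
    rw [norm_mul, norm_mul]
    have h1 : ‖(X a b)‖ ≤ 1 := frobNorm_le_one_entry hX.1 a b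
    have h2 : ‖((starRingEnd ℂ) (X c e))‖ ≤ 1 := by
      rw [Complex.norm_conj]; exact frobNorm_le_one_entry hX.1 c e
    have h3 := norm_nonneg (Matrix.trace ((Matrix.single c e (1:ℂ))ᴴ *
      M (Matrix.single a b (1:ℂ))))
    have hA := mul_le_mul_of_nonneg_right h1
      (mul_nonneg (norm_nonneg ((starRingEnd ℂ) (X c e))) h3)
    have hB := mul_le_mul_of_nonneg_right h2 h3
    rw [one_mul] at hA hB
    linarith
  have hmem : ∀ X ∈ U2 d r, ‖(Matrix.trace (Xᴴ * M X))‖ ≤ rNorm r M :=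
    fun X hX => le_csSup hbdd ⟨X, hX, rfl⟩
  have hzero : (0 : Matrix (Fin d) (Fin d) ℂ) ∈ U2 d r := by
    refine mem_U2 hr 0 (by simp) ?_
    rw [Matrix.rank_zero]
    norm_num
  have hN0 : 0 ≤ rNorm r M := le_trans (norm_nonneg _) (hmem 0 hzero)
  have hs2 : ((Real.sqrt 2 : ℝ) : ℂ) ≠ 0 := by
    rw [Complex.ofReal_ne_zero]
    positivity
  -- scaling
  have hQle : ∀ Z : Matrix (Fin d) (Fin d) ℂ,
      (((Real.sqrt 2 : ℝ) : ℂ))⁻¹ • Z ∈ U2 d r →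
      ‖(Matrix.trace (Zᴴ * M Z))‖ ≤ 2 * rNorm r M := by
    intro Z hZ
    set W := (((Real.sqrt 2 : ℝ) : ℂ))⁻¹ • Z with hW
    have hZW : Z = ((Real.sqrt 2 : ℝ) : ℂ) • W := (smul_inv_smul₀ hs2 Z).symm
    have hQ : Matrix.trace (Zᴴ * M Z) = 2 * Matrix.trace (Wᴴ * M W) := by
      conv_lhs => rw [hZW]
      rw [Matrix.conjTranspose_smul, _root_.map_smul M, Matrix.smul_mul, Matrix.mul_smul,
        Matrix.trace_smul, Matrix.trace_smul, smul_smul, smul_eq_mul, RCLike.star_def,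
        Complex.conj_ofReal, ← Complex.ofReal_mul,
        Real.mul_self_sqrt (by norm_num : (0:ℝ) ≤ 2)]
      norm_num
    rw [hQ, norm_mul]
    have : ‖(2:ℂ)‖ = 2 := by norm_num
    rw [this]
    exact mul_le_mul_of_nonneg_left (hmem W hZ) (by norm_num)
  -- key bound on matrix elements
  have hkey : ∀ a b c e : Fin d,
      ‖(Matrix.trace ((Matrix.single c e (1:ℂ))ᴴ *
        M (Matrix.single a b (1:ℂ))))‖ ≤ 2 * rNorm r M := by
    intro a b c e
    by_cases hcase : a = c ∧ b = e
    · obtain ⟨rfl, rfl⟩ := hcase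
      have := hmem _ (stdBasisMatrix_mem_U2 hr a b)
      linarith
    · set X := Matrix.single c e (1:ℂ) with hX
      set Y := Matrix.single a b (1:ℂ) with hY
      have e1 := Q_expand M 1 X Y
      have e2 := Q_expand M (-1) X Y
      have e3 := Q_expand M Complex.I X Y
      have e4 := Q_expand M (-Complex.I) X Y
      have hpol : Matrix.trace (Xᴴ * M Y) = (1/4) *
          (Matrix.trace ((Y + (1:ℂ) • X)ᴴ * M (Y + (1:ℂ) • X))
            - Matrix.trace ((Y + (-1:ℂ) • X)ᴴ * M (Y + (-1:ℂ) • X))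
            + Complex.I * Matrix.trace ((Y + Complex.I • X)ᴴ * M (Y + Complex.I • X))
            - Complex.I * Matrix.trace ((Y + (-Complex.I) • X)ᴴ * M (Y + (-Complex.I) • X))) := by
        rw [e1, e2, e3, e4]
        simp only [_root_.map_one, _root_.map_neg, Complex.conj_I]
        linear_combination ((Matrix.trace (Xᴴ * M Y) - Matrix.trace (Yᴴ * M X)) / 2)
          * Complex.I_mul_I
      have hQ1 := hQle (Y + (1:ℂ) • X) (combo_mem_U2 hr a b c e 1 (by simp) hcase)
      have hQ2 := hQle (Y + (-1:ℂ) • X) (combo_mem_U2 hr a b c e (-1) (by simp) hcase)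
      have hQ3 := hQle (Y + Complex.I • X) (combo_mem_U2 hr a b c e Complex.I (by simp) hcase)
      have hQ4 := hQle (Y + (-Complex.I) • X) (combo_mem_U2 hr a b c e (-Complex.I) (by simp) hcase)
      set q1 := Matrix.trace ((Y + (1:ℂ) • X)ᴴ * M (Y + (1:ℂ) • X))
      set q2 := Matrix.trace ((Y + (-1:ℂ) • X)ᴴ * M (Y + (-1:ℂ) • X))
      set q3 := Matrix.trace ((Y + Complex.I • X)ᴴ * M (Y + Complex.I • X))
      set q4 := Matrix.trace ((Y + (-Complex.I) • X)ᴴ * M (Y + (-Complex.I) • X))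
      have habs4 : ‖(q1 - q2 + Complex.I * q3 - Complex.I * q4)‖
          ≤ ‖q1‖ + ‖q2‖ + ‖q3‖ + ‖q4‖ := by
        calc ‖q1 - q2 + Complex.I * q3 - Complex.I * q4‖
            ≤ ‖q1 - q2 + Complex.I * q3‖ + ‖Complex.I * q4‖ := norm_sub_le _ _
          _ ≤ ‖q1 - q2‖ + ‖Complex.I * q3‖ + ‖Complex.I * q4‖ := by
              have := norm_add_le (q1 - q2) (Complex.I * q3)
              linarith
          _ ≤ ‖q1‖ + ‖q2‖ + ‖Complex.I * q3‖ + ‖Complex.I * q4‖ := by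
              have := norm_sub_le q1 q2
              linarith
          _ = ‖q1‖ + ‖q2‖ + ‖q3‖ + ‖q4‖ := by
              simp [norm_mul, Complex.norm_I]
      rw [hpol, norm_mul]
      have h14 : ‖(1/4 : ℂ)‖ = 1/4 := by norm_num
      rw [h14]
      nlinarith [hQ1, hQ2, hQ3, hQ4, habs4, hN0]
  -- Frobenius bound
  have hF : superFrobNorm M ≤ 2 * (d:ℝ)^2 * rNorm r M := by
    rw [superFrobNorm]
    have hsum : (∑ a : Fin d, ∑ b : Fin d, ∑ c : Fin d, ∑ e : Fin d,
        ‖(Matrix.trace ((Matrix.single c e (1:ℂ))ᴴ *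
          M (Matrix.single a b (1:ℂ))))‖ ^ 2)
        ≤ (d:ℝ)^4 * (2 * rNorm r M)^2 := by
      have hterm : ∀ a b c e : Fin d,
          ‖(Matrix.trace ((Matrix.single c e (1:ℂ))ᴴ *
            M (Matrix.single a b (1:ℂ))))‖ ^ 2 ≤ (2 * rNorm r M)^2 := by
        intro a b c e
        have h := hkey a b c e
        have := norm_nonneg (Matrix.trace ((Matrix.single c e (1:ℂ))ᴴ *
          M (Matrix.single a b (1:ℂ))))
        nlinarith
      calc (∑ a : Fin d, ∑ b : Fin d, ∑ c : Fin d, ∑ e : Fin d,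
          ‖(Matrix.trace ((Matrix.single c e (1:ℂ))ᴴ *
            M (Matrix.single a b (1:ℂ))))‖ ^ 2)
          ≤ ∑ _a : Fin d, ∑ _b : Fin d, ∑ _c : Fin d, ∑ _e : Fin d, (2 * rNorm r M)^2 :=
            Finset.sum_le_sum fun a _ => Finset.sum_le_sum fun b _ =>
              Finset.sum_le_sum fun c _ => Finset.sum_le_sum fun e _ => hterm a b c e
        _ = (d:ℝ)^4 * (2 * rNorm r M)^2 := by
            simp [Finset.sum_const, Finset.card_univ]
            ring
    refine (Real.sqrt_le_sqrt hsum).trans ?_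
    rw [show ((d:ℝ)^4 * (2 * rNorm r M)^2) = (2 * (d:ℝ)^2 * rNorm r M)^2 by ring]
    exact le_of_eq (Real.sqrt_sq (by positivity))
  rw [ge_iff_le]
  rcases Nat.eq_zero_or_pos d with hd | hd
  · subst hd
    have h0 : superFrobNorm M = 0 := by
      rw [superFrobNorm]
      simp
    rw [h0, mul_zero]
    exact hN0
  · have hdpos : (0:ℝ) < (d:ℝ)^2 := by positivity
    have hc : (0:ℝ) < 3 * Real.sqrt 2 * (d:ℝ)^2 := by positivity
    rw [one_div, inv_mul_le_iff₀ hc]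
    have h14 : (1.4:ℝ) ≤ Real.sqrt 2 := by
      have h := Real.sqrt_le_sqrt (show (1.96:ℝ) ≤ 2 by norm_num)
      rwa [show (1.96:ℝ) = 1.4^2 by norm_num, Real.sqrt_sq (by norm_num : (0:ℝ) ≤ 1.4)] at h
    refine hF.trans ?_
    nlinarith [mul_nonneg (mul_nonneg (show (0:ℝ) ≤ 3 * Real.sqrt 2 - 2 by linarith) hdpos.le) hN0]
end

section
/- With U₂ and ‖·‖_(r) as defined (r ≥ 2), for any self-adjoint linear operator M on ℂ^{d×d}: ‖M‖_(r) ≤ ‖M‖_op ≤ ‖M‖_F, where ‖M‖_op is the operator norm of M as a linear map on the Hilbert space ℂ^{d×d} with Hilbert–Schmidt inner product. Consequently ‖·‖_(r) is a norm on the space of self-adjoint operators. -/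
open Matrix BigOperators

/-- Operator norm of a superoperator wrt the Hilbert–Schmidt (Frobenius) norm. -/
noncomputable def superOpNorm {d : ℕ}
    (M : Matrix (Fin d) (Fin d) ℂ →ₗ[ℂ] Matrix (Fin d) (Fin d) ℂ) : ℝ :=
  sSup ((fun X => frobNorm (M X)) '' {X | frobNorm X ≤ 1})

section Aux
variable {d : ℕ}

/-- sum of eigenvalues of a Hermitian matrix equals its trace -/
lemma sum_eigenvalues_eq_trace {n : ℕ} {A : Matrix (Fin n) (Fin n) ℂ} (hA : A.IsHermitian) :
    ((∑ i, hA.eigenvalues i : ℝ) : ℂ) = A.trace := by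
  classical
  simp [hA.trace_eq_sum_eigenvalues]

lemma sq_singVals (X : Matrix (Fin d) (Fin d) ℂ) (i : Fin d) :
    singVals X i ^ 2 = (Matrix.isHermitian_conjTranspose_mul_self X).eigenvalues i :=
  Real.sq_sqrt (Matrix.eigenvalues_conjTranspose_mul_self_nonneg X i)

lemma singVals_nonneg (X : Matrix (Fin d) (Fin d) ℂ) (i : Fin d) : 0 ≤ singVals X i :=
  Real.sqrt_nonneg _

lemma sum_sq_singVals (X : Matrix (Fin d) (Fin d) ℂ) :
    ∑ i, singVals X i ^ 2 = ∑ i, ∑ j, ‖X i j‖ ^ 2 := by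
  have h := sum_eigenvalues_eq_trace (Matrix.isHermitian_conjTranspose_mul_self X)
  have h2 : (Xᴴ * X).trace = ((∑ i, ∑ j, ‖X i j‖ ^ 2 : ℝ) : ℂ) := by
    rw [Matrix.trace]
    push_cast
    rw [Finset.sum_comm]
    refine Finset.sum_congr rfl fun i _ => ?_
    simp only [Matrix.mul_apply, Matrix.diag, Matrix.conjTranspose_apply]
    refine Finset.sum_congr rfl fun k _ => ?_
    rw [Complex.star_def, ← Complex.normSq_eq_conj_mul_self, Complex.normSq_eq_norm_sq]
    push_cast
    ring
  rw [h2] at h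
  have := Complex.ofReal_injective h
  simp_rw [sq_singVals, this]

end Aux
section Aux2
variable {d : ℕ}

noncomputable def toE (X : Matrix (Fin d) (Fin d) ℂ) : EuclideanSpace ℂ (Fin d × Fin d) :=
  WithLp.toLp 2 (fun p : Fin d × Fin d => X p.1 p.2)

lemma frobNorm_eq_norm_toE (X : Matrix (Fin d) (Fin d) ℂ) : frobNorm X = ‖toE X‖ := by
  rw [frobNorm, sum_sq_singVals, EuclideanSpace.norm_eq]
  congr 1
  rw [← Finset.sum_product']
  rfl

lemma frobNorm_nonneg (X : Matrix (Fin d) (Fin d) ℂ) : 0 ≤ frobNorm X := Real.sqrt_nonneg _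

lemma trace_conjTranspose_mul (X A : Matrix (Fin d) (Fin d) ℂ) :
    Matrix.trace (Xᴴ * A) = inner ℂ (toE X) (toE A) := by
  rw [Matrix.trace, PiLp.inner_apply]
  rw [Fintype.sum_prod_type]
  simp only [Matrix.diag, Matrix.mul_apply, Matrix.conjTranspose_apply]
  rw [Finset.sum_comm]
  simp [toE, RCLike.inner_apply, mul_comm]

lemma abs_trace_le (X A : Matrix (Fin d) (Fin d) ℂ) :
    ‖Matrix.trace (Xᴴ * A)‖ ≤ frobNorm X * frobNorm A := by
  rw [trace_conjTranspose_mul, frobNorm_eq_norm_toE, frobNorm_eq_norm_toE]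
  exact norm_inner_le_norm _ _

end Aux2
section Aux3
variable {d : ℕ}

lemma trace_stdBasis_conjTranspose_mul (c e : Fin d) (A : Matrix (Fin d) (Fin d) ℂ) :
    Matrix.trace ((Matrix.single c e (1 : ℂ))ᴴ * A) = A c e := by
  classical
  rw [Matrix.trace]
  simp only [Matrix.diag, Matrix.mul_apply, Matrix.conjTranspose_apply, Matrix.single,
    Matrix.of_apply, ite_and, _root_.map_one, _root_.map_zero, ite_mul, one_mul, zero_mul]
  rw [Finset.sum_comm]
  simp [apply_ite (starRingEnd ℂ), Finset.sum_ite_eq]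

lemma apply_entry (M : Matrix (Fin d) (Fin d) ℂ →ₗ[ℂ] Matrix (Fin d) (Fin d) ℂ)
    (X : Matrix (Fin d) (Fin d) ℂ) (c e : Fin d) :
    (M X) c e = ∑ a, ∑ b, X a b * (M (Matrix.single a b 1)) c e := by
  conv_lhs => rw [Matrix.matrix_eq_sum_single X]
  rw [map_sum]
  simp only [Matrix.sum_apply]
  refine Finset.sum_congr rfl fun a _ => ?_
  rw [map_sum]
  simp only [Matrix.sum_apply]
  refine Finset.sum_congr rfl fun b _ => ?_
  have : Matrix.single a b (X a b) = X a b • Matrix.single a b (1:ℂ) := by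
    rw [Matrix.smul_single, smul_eq_mul, mul_one]
  rw [this, _root_.map_smul]
  rfl

lemma superFrobNorm_nonneg (M : Matrix (Fin d) (Fin d) ℂ →ₗ[ℂ] Matrix (Fin d) (Fin d) ℂ) :
    0 ≤ superFrobNorm M := Real.sqrt_nonneg _

lemma frobNorm_sq (X : Matrix (Fin d) (Fin d) ℂ) :
    frobNorm X ^ 2 = ∑ a, ∑ b, ‖X a b‖ ^ 2 := by
  rw [frobNorm, Real.sq_sqrt (Finset.sum_nonneg fun i _ => sq_nonneg _), sum_sq_singVals]

lemma superFrobNorm_sq (M : Matrix (Fin d) (Fin d) ℂ →ₗ[ℂ] Matrix (Fin d) (Fin d) ℂ) :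
    superFrobNorm M ^ 2 = ∑ a, ∑ b, ∑ c, ∑ e,
      ‖(M (Matrix.single a b 1)) c e‖ ^ 2 := by
  rw [superFrobNorm, Real.sq_sqrt (by positivity)]
  refine Finset.sum_congr rfl fun a _ => Finset.sum_congr rfl fun b _ =>
    Finset.sum_congr rfl fun c _ => Finset.sum_congr rfl fun e _ => ?_
  rw [trace_stdBasis_conjTranspose_mul]

lemma sum_comm4 (f : Fin d → Fin d → Fin d → Fin d → ℝ) :
    ∑ c, ∑ e, ∑ a, ∑ b, f a b c e = ∑ a, ∑ b, ∑ c, ∑ e, f a b c e := by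
  calc ∑ c, ∑ e, ∑ a, ∑ b, f a b c e
      = ∑ c, ∑ a, ∑ e, ∑ b, f a b c e := Finset.sum_congr rfl fun c _ => Finset.sum_comm
    _ = ∑ a, ∑ c, ∑ e, ∑ b, f a b c e := Finset.sum_comm
    _ = ∑ a, ∑ b, ∑ c, ∑ e, f a b c e := Finset.sum_congr rfl fun a _ =>
        calc ∑ c, ∑ e, ∑ b, f a b c e
            = ∑ c, ∑ b, ∑ e, f a b c e := Finset.sum_congr rfl fun c _ => Finset.sum_comm
          _ = ∑ b, ∑ c, ∑ e, f a b c e := Finset.sum_comm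

lemma frob_apply_le (M : Matrix (Fin d) (Fin d) ℂ →ₗ[ℂ] Matrix (Fin d) (Fin d) ℂ)
    (X : Matrix (Fin d) (Fin d) ℂ) :
    frobNorm (M X) ≤ superFrobNorm M * frobNorm X := by
  have hX := frobNorm_sq X
  have hMX := frobNorm_sq (M X)
  have hS := superFrobNorm_sq M
  -- entrywise Cauchy-Schwarz
  have key : ∀ c e : Fin d, ‖(M X) c e‖ ^ 2 ≤
      (∑ a, ∑ b, ‖X a b‖ ^ 2) *
      (∑ a, ∑ b, ‖(M (Matrix.single a b 1)) c e‖ ^ 2) := by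
    intro c e
    rw [apply_entry M X c e]
    set F : Fin d × Fin d → ℝ := fun p => ‖X p.1 p.2‖ with hF
    set G : Fin d × Fin d → ℝ := fun p => ‖(M (Matrix.single p.1 p.2 1)) c e‖
      with hG
    have hps : (∑ a, ∑ b, X a b * (M (Matrix.single a b 1)) c e)
        = ∑ p : Fin d × Fin d, X p.1 p.2 * (M (Matrix.single p.1 p.2 1)) c e :=
      (Fintype.sum_prod_type
        (f := fun p : Fin d × Fin d => X p.1 p.2 * (M (Matrix.single p.1 p.2 1)) c e)).symm
    have habs : ‖∑ a, ∑ b, X a b * (M (Matrix.single a b 1)) c e‖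
        ≤ ∑ p : Fin d × Fin d, F p * G p := by
      rw [hps]
      refine (norm_sum_le _ _).trans_eq ?_
      exact Finset.sum_congr rfl fun p _ => norm_mul _ _
    calc ‖∑ a, ∑ b, X a b * (M (Matrix.single a b 1)) c e‖ ^ 2
        ≤ (∑ p : Fin d × Fin d, F p * G p) ^ 2 := by
          apply pow_le_pow_left₀ (norm_nonneg _) habs
      _ ≤ (∑ p : Fin d × Fin d, F p ^ 2) * (∑ p : Fin d × Fin d, G p ^ 2) :=
          Finset.sum_mul_sq_le_sq_mul_sq _ _ _
      _ = _ := by rw [Fintype.sum_prod_type, Fintype.sum_prod_type]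
  have main : frobNorm (M X) ^ 2 ≤ (superFrobNorm M * frobNorm X) ^ 2 := by
    rw [hMX]
    have : (superFrobNorm M * frobNorm X) ^ 2 = frobNorm X ^2 * superFrobNorm M ^2 := by ring
    rw [this, hX, hS]
    calc ∑ c, ∑ e, ‖(M X) c e‖ ^ 2
        ≤ ∑ c, ∑ e, (∑ a, ∑ b, ‖X a b‖ ^ 2) *
            (∑ a, ∑ b, ‖(M (Matrix.single a b 1)) c e‖ ^ 2) :=
          Finset.sum_le_sum fun c _ => Finset.sum_le_sum fun e _ => key c e
      _ = (∑ a, ∑ b, ‖X a b‖ ^ 2) * ∑ c, ∑ e, ∑ a, ∑ b,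
            ‖(M (Matrix.single a b 1)) c e‖ ^ 2 := by
          rw [Finset.mul_sum]; refine Finset.sum_congr rfl fun c _ => ?_; rw [Finset.mul_sum]
      _ = (∑ a, ∑ b, ‖X a b‖ ^ 2) * ∑ a, ∑ b, ∑ c, ∑ e,
            ‖(M (Matrix.single a b 1)) c e‖ ^ 2 := by
          congr 1
          exact sum_comm4 _
  have h1 := frobNorm_nonneg (M X)
  have h2 := mul_nonneg (superFrobNorm_nonneg M) (frobNorm_nonneg X)
  nlinarith [main]

end Aux3
section Aux4
open ComplexOrder
variable {d : ℕ}

lemma nucNorm_nonneg (X : Matrix (Fin d) (Fin d) ℂ) : 0 ≤ nucNorm X :=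
  Finset.sum_nonneg fun i _ => singVals_nonneg X i

lemma nucNorm_le_sqrt_rank_mul_frobNorm (Z : Matrix (Fin d) (Fin d) ℂ) :
    nucNorm Z ≤ Real.sqrt Z.rank * frobNorm Z := by
  classical
  set s : Finset (Fin d) := Finset.univ.filter (fun i => singVals Z i ≠ 0) with hs
  have hiff : ∀ i, singVals Z i ≠ 0 ↔
      (Matrix.isHermitian_conjTranspose_mul_self Z).eigenvalues i ≠ 0 := fun i =>
    not_congr (Real.sqrt_eq_zero (Matrix.eigenvalues_conjTranspose_mul_self_nonneg Z i))
  have hcard : (s.card : ℝ) = (Z.rank : ℝ) := by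
    norm_cast
    rw [← Matrix.rank_conjTranspose_mul_self Z,
      (Matrix.isHermitian_conjTranspose_mul_self Z).rank_eq_card_non_zero_eigs,
      Fintype.card_subtype]
    congr 1
    exact Finset.filter_congr fun i _ => hiff i
  have h1 : nucNorm Z = ∑ i ∈ s, singVals Z i := by
    rw [nucNorm]
    exact (Finset.sum_filter_of_ne fun i _ hne => hne).symm
  have h2 : (∑ i ∈ s, singVals Z i) ^ 2 ≤ s.card * ∑ i ∈ s, singVals Z i ^ 2 :=
    sq_sum_le_card_mul_sum_sq
  have h3 : ∑ i ∈ s, singVals Z i ^ 2 ≤ ∑ i, singVals Z i ^ 2 :=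
    Finset.sum_le_sum_of_subset_of_nonneg (Finset.subset_univ s) fun i _ _ => sq_nonneg _
  have h4 : frobNorm Z ^ 2 = ∑ i, singVals Z i ^ 2 :=
    Real.sq_sqrt (Finset.sum_nonneg fun i _ => sq_nonneg _)
  have h5 : nucNorm Z ^ 2 ≤ (Real.sqrt Z.rank * frobNorm Z) ^ 2 := by
    rw [h1]
    calc (∑ i ∈ s, singVals Z i) ^ 2 ≤ s.card * ∑ i ∈ s, singVals Z i ^ 2 := h2
      _ ≤ (Z.rank : ℝ) * frobNorm Z ^ 2 := by
          rw [h4]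
          exact mul_le_mul (le_of_eq hcard) h3
            (Finset.sum_nonneg fun i _ => sq_nonneg _) (Nat.cast_nonneg _)
      _ = (Real.sqrt Z.rank * frobNorm Z) ^ 2 := by
          rw [mul_pow, Real.sq_sqrt (Nat.cast_nonneg _)]
  have := nucNorm_nonneg Z
  have h6 : 0 ≤ Real.sqrt Z.rank * frobNorm Z :=
    mul_nonneg (Real.sqrt_nonneg _) (frobNorm_nonneg Z)
  nlinarith [h5]

lemma rank_stdBasisMatrix_le_one (a b : Fin d) (γ : ℂ) :
    (Matrix.single a b γ).rank ≤ 1 := by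
  classical
  rw [Matrix.rank]
  set u : Fin d → ℂ := Function.update (0 : Fin d → ℂ) a 1 with hu
  have hle : LinearMap.range (Matrix.single a b γ).mulVecLin ≤
      Submodule.span ℂ {u} := by
    rintro x ⟨v, rfl⟩
    rw [Submodule.mem_span_singleton]
    refine ⟨γ * v b, ?_⟩
    rw [Matrix.mulVecLin_apply, Matrix.single_mulVec]
    ext i
    rcases eq_or_ne i a with rfl | h
    · simp [hu]
    · simp [hu, Function.update_of_ne h]
  calc Module.finrank ℂ (LinearMap.range (Matrix.single a b γ).mulVecLin)
      ≤ Module.finrank ℂ (Submodule.span ℂ ({u} : Set (Fin d → ℂ))) :=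
        Submodule.finrank_mono hle
    _ ≤ 1 := by
        have := finrank_span_le_card (R := ℂ) ({u} : Set (Fin d → ℂ))
        simpa using this

lemma rank_add_le_matrix (A B : Matrix (Fin d) (Fin d) ℂ) :
    (A + B).rank ≤ A.rank + B.rank := by
  classical
  rw [Matrix.rank, Matrix.rank, Matrix.rank]
  have hle : LinearMap.range (A + B).mulVecLin ≤
      LinearMap.range A.mulVecLin ⊔ LinearMap.range B.mulVecLin := by
    rintro x ⟨v, rfl⟩
    rw [Matrix.mulVecLin_add]
    exact Submodule.mem_sup.2 ⟨_, ⟨v, rfl⟩, _, ⟨v, rfl⟩, rfl⟩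
  calc Module.finrank ℂ (LinearMap.range (A + B).mulVecLin)
      ≤ Module.finrank ℂ ↥(LinearMap.range A.mulVecLin ⊔ LinearMap.range B.mulVecLin) :=
        Submodule.finrank_mono hle
    _ ≤ _ := Submodule.finrank_add_le_finrank_add_finrank _ _

end Aux4
section Aux5
variable {d : ℕ}

lemma toE_add (A B : Matrix (Fin d) (Fin d) ℂ) : toE (A + B) = toE A + toE B := by ext p; rfl

lemma frobNorm_add_le (A B : Matrix (Fin d) (Fin d) ℂ) :
    frobNorm (A + B) ≤ frobNorm A + frobNorm B := by
  rw [frobNorm_eq_norm_toE, frobNorm_eq_norm_toE, frobNorm_eq_norm_toE, toE_add]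
  exact norm_add_le _ _

lemma frobNorm_zero : frobNorm (0 : Matrix (Fin d) (Fin d) ℂ) = 0 := by
  rw [frobNorm_eq_norm_toE]
  have : toE (0 : Matrix (Fin d) (Fin d) ℂ) = 0 := by ext p; rfl
  rw [this, norm_zero]

lemma frobNorm_stdBasisMatrix (a b : Fin d) (γ : ℂ) :
    frobNorm (Matrix.single a b γ) = ‖γ‖ := by
  have h := frobNorm_sq (Matrix.single a b γ)
  have h2 : ∑ i, ∑ j, ‖Matrix.single a b γ i j‖ ^ 2
      = ‖γ‖ ^ 2 := by
    simp [Matrix.single, apply_ite (fun z : ℂ => ‖z‖), ite_and, Finset.sum_ite_eq, sq]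
  rw [h2] at h
  have h3 := frobNorm_nonneg (Matrix.single a b γ)
  nlinarith [norm_nonneg γ]

lemma smul_stdBasis_one (a b : Fin d) (γ : ℂ) :
    γ • Matrix.single a b (1 : ℂ) = Matrix.single a b γ := by
  rw [Matrix.smul_single, smul_eq_mul, mul_one]

lemma mem_U2_pair {r : ℕ} (hr : 2 ≤ r) (a b c e : Fin d) (γ δ : ℂ)
    (hγ : ‖γ‖ ≤ 1/2) (hδ : ‖δ‖ ≤ 1/2) :
    γ • Matrix.single a b (1:ℂ) + δ • Matrix.single c e (1:ℂ) ∈ U2 d r := by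
  set W := γ • Matrix.single a b (1:ℂ) + δ • Matrix.single c e (1:ℂ) with hW
  have hWeq : W = Matrix.single a b γ + Matrix.single c e δ := by
    rw [hW, smul_stdBasis_one, smul_stdBasis_one]
  have hfrob : frobNorm W ≤ 1 := by
    rw [hWeq]
    calc frobNorm (Matrix.single a b γ + Matrix.single c e δ)
        ≤ frobNorm (Matrix.single a b γ) + frobNorm (Matrix.single c e δ) :=
          frobNorm_add_le _ _
      _ = ‖γ‖ + ‖δ‖ := by
          rw [frobNorm_stdBasisMatrix, frobNorm_stdBasisMatrix]
      _ ≤ 1 := by linarith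
  refine ⟨hfrob, ?_⟩
  have hrank : (W.rank : ℝ) ≤ (r : ℝ) := by
    have h1 : W.rank ≤ 2 := by
      rw [hWeq]
      calc (Matrix.single a b γ + Matrix.single c e δ).rank
          ≤ (Matrix.single a b γ).rank + (Matrix.single c e δ).rank :=
            rank_add_le_matrix _ _
        _ ≤ 1 + 1 := add_le_add (rank_stdBasisMatrix_le_one a b γ)
            (rank_stdBasisMatrix_le_one c e δ)
    exact_mod_cast h1.trans hr
  calc nucNorm W ≤ Real.sqrt W.rank * frobNorm W := nucNorm_le_sqrt_rank_mul_frobNorm W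
    _ ≤ Real.sqrt r * frobNorm W :=
        mul_le_mul_of_nonneg_right (Real.sqrt_le_sqrt hrank) (frobNorm_nonneg W)

lemma zero_mem_U2 {r : ℕ} : (0 : Matrix (Fin d) (Fin d) ℂ) ∈ U2 d r := by
  constructor
  · rw [frobNorm_zero]; norm_num
  · have h1 := nucNorm_le_sqrt_rank_mul_frobNorm (0 : Matrix (Fin d) (Fin d) ℂ)
    rw [Matrix.rank_zero, frobNorm_zero] at h1
    simp only [frobNorm_zero, mul_zero]
    simpa using h1

lemma expand_quad (M : Matrix (Fin d) (Fin d) ℂ →ₗ[ℂ] Matrix (Fin d) (Fin d) ℂ)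
    (X Y : Matrix (Fin d) (Fin d) ℂ) (γ δ : ℂ) :
    Matrix.trace ((γ • X + δ • Y)ᴴ * M (γ • X + δ • Y)) =
      starRingEnd ℂ γ * γ * Matrix.trace (Xᴴ * M X) +
      starRingEnd ℂ γ * δ * Matrix.trace (Xᴴ * M Y) +
      starRingEnd ℂ δ * γ * Matrix.trace (Yᴴ * M X) +
      starRingEnd ℂ δ * δ * Matrix.trace (Yᴴ * M Y) := by
  rw [map_add, _root_.map_smul, _root_.map_smul]
  simp only [Matrix.conjTranspose_add, Matrix.conjTranspose_smul, Matrix.add_mul, Matrix.mul_add,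
    Matrix.smul_mul, Matrix.mul_smul, Matrix.trace_add, Matrix.trace_smul, smul_smul, smul_eq_mul,
    Complex.star_def]
  ring

end Aux5
theorem rNorm_le_superOpNorm_le_superFrobNorm {d r : ℕ} (hr : 2 ≤ r)
    (M : Matrix (Fin d) (Fin d) ℂ →ₗ[ℂ] Matrix (Fin d) (Fin d) ℂ)
    (hsa : ∀ X Y : Matrix (Fin d) (Fin d) ℂ,
      Matrix.trace (Xᴴ * M Y) = Matrix.trace ((M X)ᴴ * Y)) :
    rNorm r M ≤ superOpNorm M ∧ superOpNorm M ≤ superFrobNorm M ∧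
      (rNorm r M = 0 → M = 0) := by
  have hsFN := superFrobNorm_nonneg M
  -- the image set for superOpNorm is bounded above
  have bddOp : BddAbove ((fun X => frobNorm (M X)) '' {X | frobNorm X ≤ 1}) := by
    refine ⟨superFrobNorm M, ?_⟩
    rintro y ⟨X, hX, rfl⟩
    calc frobNorm (M X) ≤ superFrobNorm M * frobNorm X := frob_apply_le M X
      _ ≤ superFrobNorm M * 1 := mul_le_mul_of_nonneg_left hX hsFN
      _ = superFrobNorm M := mul_one _
  have bddR : BddAbove ((fun X => ‖Matrix.trace (Xᴴ * M X)‖) '' U2 d r) := by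
    refine ⟨superFrobNorm M, ?_⟩
    rintro y ⟨X, hX, rfl⟩
    have h1 := frobNorm_nonneg X
    have h2 := frobNorm_nonneg (M X)
    calc ‖Matrix.trace (Xᴴ * M X)‖ ≤ frobNorm X * frobNorm (M X) :=
          abs_trace_le X (M X)
      _ ≤ frobNorm X * (superFrobNorm M * frobNorm X) :=
          mul_le_mul_of_nonneg_left (frob_apply_le M X) h1
      _ = superFrobNorm M * (frobNorm X * frobNorm X) := by ring
      _ ≤ superFrobNorm M * 1 := by
          refine mul_le_mul_of_nonneg_left ?_ hsFN
          exact mul_le_one₀ hX.1 h1 hX.1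
      _ = superFrobNorm M := mul_one _
  have hOpNonneg : (0 : ℝ) ≤ superOpNorm M := by
    refine le_csSup bddOp ⟨0, ?_, ?_⟩
    · show frobNorm (0 : Matrix (Fin d) (Fin d) ℂ) ≤ 1
      rw [frobNorm_zero]; norm_num
    · show frobNorm (M 0) = 0
      rw [map_zero, frobNorm_zero]
  refine ⟨?_, ?_, ?_⟩
  · -- rNorm ≤ superOpNorm
    refine Real.sSup_le ?_ hOpNonneg
    rintro y ⟨X, hX, rfl⟩
    calc ‖Matrix.trace (Xᴴ * M X)‖ ≤ frobNorm X * frobNorm (M X) :=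
          abs_trace_le X (M X)
      _ ≤ frobNorm (M X) := mul_le_of_le_one_left (frobNorm_nonneg _) hX.1
      _ ≤ superOpNorm M := le_csSup bddOp ⟨X, hX.1, rfl⟩
  · -- superOpNorm ≤ superFrobNorm
    refine Real.sSup_le ?_ hsFN
    rintro y ⟨X, hX, rfl⟩
    calc frobNorm (M X) ≤ superFrobNorm M * frobNorm X := frob_apply_le M X
      _ ≤ superFrobNorm M * 1 := mul_le_mul_of_nonneg_left hX hsFN
      _ = superFrobNorm M := mul_one _
  · -- nondegeneracy
    intro h0
    have hQ : ∀ Z ∈ U2 d r, Matrix.trace (Zᴴ * M Z) = 0 := by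
      intro Z hZ
      have : ‖Matrix.trace (Zᴴ * M Z)‖ ≤ 0 := by
        rw [← h0]
        exact le_csSup bddR ⟨Z, hZ, rfl⟩
      have h2 : ‖Matrix.trace (Zᴴ * M Z)‖ = 0 :=
        le_antisymm this (norm_nonneg _)
      exact norm_eq_zero.mp h2
    -- all matrix elements of M vanish
    have key : ∀ a b c e : Fin d,
        Matrix.trace ((Matrix.single a b (1:ℂ))ᴴ * M (Matrix.single c e (1:ℂ)))
          = 0 := by
      intro a b c e
      set X := Matrix.single a b (1:ℂ)
      set Y := Matrix.single c e (1:ℂ)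
      have habs_half : ‖(1:ℂ)/2‖ ≤ 1/2 := by
        rw [norm_div]; simp
      have habs_ihalf : ‖Complex.I/2‖ ≤ 1/2 := by
        rw [norm_div]; simp
      have habs_zero : ‖(0:ℂ)‖ ≤ 1/2 := by simp
      have e1 := hQ _ (mem_U2_pair hr a b c e (1/2) (1/2) habs_half habs_half)
      have e2 := hQ _ (mem_U2_pair hr a b c e (1/2) (Complex.I/2) habs_half habs_ihalf)
      have e3 := hQ _ (mem_U2_pair hr a b c e (1/2) 0 habs_half habs_zero)
      have e4 := hQ _ (mem_U2_pair hr a b c e 0 (1/2) habs_zero habs_half)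
      rw [expand_quad M X Y] at e1 e2 e3 e4
      simp only [map_div₀, _root_.map_one, _root_.map_ofNat, Complex.conj_I, map_zero]
        at e1 e2 e3 e4
      have hI := Complex.I_ne_zero
      have hI2 : Complex.I * Complex.I = -1 := Complex.I_mul_I
      linear_combination (2:ℂ)*e1 - 2*Complex.I*e2 + (-2 + 2*Complex.I)*e3 +
        (-2 + 2*Complex.I)*e4 + (Matrix.trace (Xᴴ * M Y)/2 -
          Complex.I * Matrix.trace (Yᴴ * M Y)/2 - Matrix.trace (Yᴴ * M X)/2) * hI2
    -- conclude M = 0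
    refine LinearMap.ext fun X => ?_
    have hz : ∀ a b c e : Fin d, (M (Matrix.single a b (1:ℂ))) c e = 0 := by
      intro a b c e
      have h := key c e a b
      rwa [trace_stdBasis_conjTranspose_mul] at h
    ext c e
    rw [apply_entry M X c e]
    simp [hz]
end
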